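/- Dipole asymptotics in the weighted L¹ norm: let u₀ ∈ L¹(0,∞) have finite first absolute moment ∫₀^∞ y |u₀(y)| dy < ∞, set 𝒩₁ = ∫₀^∞ y u₀(y) dy, and let u(x,t) = ∫₀^∞ (G_t(x−y) − G_t(x+y)) u₀(y) dy for x > 0, t > 0. Then ∫₀^∞ |u(x,t) − 2𝒩₁·D(x,t)| · x dx → 0 as t → ∞. -/

import Mathlib

open MeasureTheory Real Filter

/-- The 1D Gaussian heat kernel `G_t(x) = (4πt)^{-1/2} exp(-x²/(4t))`. -/
noncomputable def heatKernel1 (t x : ℝ) : ℝ :=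
  (4 * π * t) ^ (-(1 : ℝ) / 2) * exp (-x ^ 2 / (4 * t))

/-- The dipole solution `D(x,t) = -∂_x G_t(x) = (x/(2t))·(4πt)^{-1/2} e^{-x²/(4t)}`. -/
noncomputable def dipole (x t : ℝ) : ℝ :=
  (x / (2 * t)) * (4 * π * t) ^ (-(1 : ℝ) / 2) * exp (-x ^ 2 / (4 * t))

/-- The solution of the Dirichlet problem for the heat equation on the half-line,
obtained by antisymmetric reflection:
`u(x,t) = ∫₀^∞ (G_t(x−y) − G_t(x+y)) u₀(y) dy`. -/
noncomputable def halfLineSol (u₀ : ℝ → ℝ) (x t : ℝ) : ℝ :=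
  ∫ y in Set.Ioi (0 : ℝ), (heatKernel1 t (x - y) - heatKernel1 t (x + y)) * u₀ y

/-!
Subtracting `2𝒩₁ D` from `u` leaves `∫₀^∞ R(t,x,y) u₀(y) dy`, where
`R(t,x,y) = G_t(x-y) - G_t(x+y) - 2y D(x,t)` is the first-order Taylor remainder of the reflected
kernel in `y`. By Tonelli the weighted error is at most `∫₀^∞ |u₀(y)| Φ(t,y) dy` with
`Φ(t,y) = ∫₀^∞ x |R(t,x,y)| dx`. For `x, y ≥ 0` both `G_t(x-y) - G_t(x+y)` and `D(x,t)` are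
nonnegative, and the first has first moment exactly `y` on the half-line, so `Φ(t,y) ≤ 17 y`
uniformly in `t`. On the other hand `|R| ≤ 2y ∫_{|r-x| ≤ y} |∂ₓD(r,t)| dr`, and Fubini together
with the Gaussian moment bounds `∫ x^{2k} G_t ≲ t^k` gives `Φ(t,y) = O(y²/√t + y³/t)`. Dominated
convergence with dominating function `17 y |u₀(y)|` concludes.
-/

open Set
open scoped Nat

section Tonelli

variable {α β : Type*} [MeasurableSpace α] [MeasurableSpace β] {μ : Measure α}
  {ν : Measure β}

lemma integrable_prod_of_nonneg [SFinite ν] {f : α × β → ℝ}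
    (hf : AEStronglyMeasurable f (μ.prod ν))
    (hf_nonneg : ∀ᵐ x ∂μ, 0 ≤ᵐ[ν] fun y => f (x, y))
    (hf_slice : ∀ᵐ x ∂μ, Integrable (fun y => f (x, y)) ν)
    (hf_marg : Integrable (fun x => ∫ y, f (x, y) ∂ν) μ) :
    Integrable f (μ.prod ν) := by
  refine (integrable_prod_iff hf).2 ⟨hf_slice, hf_marg.congr ?_⟩
  filter_upwards [hf_nonneg] with x hx
  exact integral_congr_ae (hx.mono fun y hy => (norm_of_nonneg hy).symm)

end Tonelli

lemma abs_le_sqrt_add_sq_div_sqrt {t : ℝ} (ht : 0 < t) (x : ℝ) :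
    |x| ≤ √t + x ^ 2 / √t := by
  have hs := sqrt_pos.2 ht
  rcases le_or_gt |x| √t with h | h
  · have h' : 0 ≤ x ^ 2 / √t := by positivity
    linarith
  · have h' : |x| ≤ |x| ^ 2 / √t := by rw [le_div_iff₀ hs, sq]; gcongr
    rw [← sq_abs]
    linarith

lemma integral_Ioi_indicator_Icc_mul_le {c y : ℝ} (hc : 0 ≤ c) (hy : 0 ≤ y) (r : ℝ) :
    ∫ x in Ioi 0, (Icc (r - y) (r + y)).indicator (fun x => x * c) x
      ≤ 2 * y * ((|r| + y) * c) := by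
  rw [setIntegral_indicator measurableSet_Icc]
  have hfin : volume (Ioi (0 : ℝ) ∩ Icc (r - y) (r + y)) < ⊤ :=
    (measure_mono inter_subset_right).trans_lt measure_Icc_lt_top
  have hbound : ∀ x ∈ Ioi (0 : ℝ) ∩ Icc (r - y) (r + y), ‖x * c‖ ≤ (|r| + y) * c := by
    rintro x ⟨hx, -, hxr⟩
    rw [norm_of_nonneg (mul_nonneg (le_of_lt hx) hc)]
    gcongr
    linarith [le_abs_self r]
  have hvol : volume.real (Ioi (0 : ℝ) ∩ Icc (r - y) (r + y)) ≤ 2 * y := by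
    refine (measureReal_mono inter_subset_right measure_Icc_lt_top.ne).trans ?_
    rw [Real.volume_real_Icc_of_le (by linarith)]; linarith
  calc ∫ x in Ioi 0 ∩ Icc (r - y) (r + y), x * c
      ≤ ‖∫ x in Ioi 0 ∩ Icc (r - y) (r + y), x * c‖ := le_norm_self _
    _ ≤ (|r| + y) * c * volume.real (Ioi (0 : ℝ) ∩ Icc (r - y) (r + y)) :=
        norm_setIntegral_le_of_norm_le_const hfin hbound
    _ ≤ 2 * y * ((|r| + y) * c) := by
        rw [mul_comm (2 * y)]; gcongr

section HeatKernel

variable {t : ℝ}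

lemma heatKernel1_pos (ht : 0 < t) (x : ℝ) : 0 < heatKernel1 t x := by
  unfold heatKernel1; positivity

@[fun_prop]
lemma continuous_heatKernel1 : Continuous (heatKernel1 t) := by
  unfold heatKernel1; fun_prop

lemma heatKernel1_le (ht : 0 < t) (x : ℝ) :
    heatKernel1 t x ≤ (4 * π * t) ^ (-(1 : ℝ) / 2) := by
  unfold heatKernel1
  refine mul_le_of_le_one_right (by positivity) (exp_le_one_iff.2 ?_)
  exact div_nonpos_of_nonpos_of_nonneg (neg_nonpos.2 (sq_nonneg x)) (by positivity)

lemma heatKernel1_neg (x : ℝ) : heatKernel1 t (-x) = heatKernel1 t x := by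
  simp [heatKernel1]

lemma heatKernel1_eq_gaussian (t : ℝ) :
    heatKernel1 t = fun x => (4 * π * t) ^ (-(1 : ℝ) / 2) * exp (-(4 * t)⁻¹ * x ^ 2) := by
  ext x; unfold heatKernel1; ring_nf

lemma integrable_heatKernel1 (ht : 0 < t) : Integrable (heatKernel1 t) := by
  rw [heatKernel1_eq_gaussian]
  exact (integrable_exp_neg_mul_sq (by positivity)).const_mul _

lemma integral_heatKernel1 (ht : 0 < t) : ∫ x, heatKernel1 t x = 1 := by
  have h : 0 < 4 * π * t := by positivity
  rw [heatKernel1_eq_gaussian, integral_const_mul, integral_gaussian, div_inv_eq_mul,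
    show π * (4 * t) = 4 * π * t by ring, sqrt_eq_rpow, ← rpow_add h]
  norm_num

lemma heatKernel1_eq_mul_heatKernel1_two_mul (ht : 0 < t) (x : ℝ) :
    heatKernel1 t x = √2 * heatKernel1 (2 * t) x * exp (-(x ^ 2 / (8 * t))) := by
  have h : 0 < 4 * π * t := by positivity
  have hsplit : exp (-x ^ 2 / (4 * t))
      = exp (-x ^ 2 / (4 * (2 * t))) * exp (-(x ^ 2 / (8 * t))) := by
    rw [← exp_add]; congr 1; field_simp; ring
  have hconst : (4 * π * t) ^ (-(1 : ℝ) / 2) = √2 * (4 * π * (2 * t)) ^ (-(1 : ℝ) / 2) := by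
    rw [show 4 * π * (2 * t) = 2 * (4 * π * t) by ring, mul_rpow (by norm_num) h.le,
      ← mul_assoc, sqrt_eq_rpow, ← rpow_add two_pos]
    norm_num
  unfold heatKernel1
  rw [hsplit, hconst]; ring

-- Half of the Gaussian exponent absorbs the weight: `s ^ k ≤ k! eˢ` with `s = x²/(8t)`.
lemma pow_mul_heatKernel1_le (ht : 0 < t) (k : ℕ) (x : ℝ) :
    x ^ (2 * k) * heatKernel1 t x ≤ 2 * k ! * (8 * t) ^ k * heatKernel1 (2 * t) x := by
  have hx : 0 ≤ x ^ (2 * k) := by rw [pow_mul]; positivity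
  have hexp : x ^ (2 * k) * exp (-(x ^ 2 / (8 * t))) ≤ k ! * (8 * t) ^ k := by
    set s := x ^ 2 / (8 * t) with hs
    have h := pow_div_factorial_le_exp (x := s) (by positivity) k
    rw [div_le_iff₀ (by positivity)] at h
    have hxs : x ^ (2 * k) = (8 * t) ^ k * s ^ k := by
      rw [pow_mul, ← mul_pow, hs]; congr 1; field_simp
    calc x ^ (2 * k) * exp (-s) = (8 * t) ^ k * (s ^ k * exp (-s)) := by rw [hxs]; ring
      _ ≤ (8 * t) ^ k * (exp s * k ! * exp (-s)) := by gcongr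
      _ = k ! * (8 * t) ^ k := by rw [mul_right_comm, ← exp_add]; simp; ring
  have hsqrt : √2 ≤ 2 := by
    rw [sqrt_le_left (by norm_num)]; norm_num
  have hG := (heatKernel1_pos (by positivity : 0 < 2 * t) x).le
  rw [heatKernel1_eq_mul_heatKernel1_two_mul ht]
  calc x ^ (2 * k) * (√2 * heatKernel1 (2 * t) x * exp (-(x ^ 2 / (8 * t))))
      = √2 * heatKernel1 (2 * t) x * (x ^ (2 * k) * exp (-(x ^ 2 / (8 * t)))) := by ring
    _ ≤ 2 * heatKernel1 (2 * t) x * (k ! * (8 * t) ^ k) := by gcongr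
    _ = _ := by ring

lemma integrable_pow_mul_heatKernel1 (ht : 0 < t) (k : ℕ) :
    Integrable (fun x => x ^ (2 * k) * heatKernel1 t x) := by
  refine ((integrable_heatKernel1 (by positivity : 0 < 2 * t)).const_mul
    (2 * k ! * (8 * t) ^ k)).mono' (by fun_prop) (Eventually.of_forall fun x => ?_)
  rw [norm_of_nonneg (mul_nonneg (by rw [pow_mul]; positivity) (heatKernel1_pos ht x).le)]
  exact pow_mul_heatKernel1_le ht k x

lemma integral_pow_mul_heatKernel1_le (ht : 0 < t) (k : ℕ) :
    ∫ x, x ^ (2 * k) * heatKernel1 t x ≤ 2 * k ! * (8 * t) ^ k := by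
  have h2t : 0 < 2 * t := by positivity
  calc ∫ x, x ^ (2 * k) * heatKernel1 t x
      ≤ ∫ x, 2 * k ! * (8 * t) ^ k * heatKernel1 (2 * t) x :=
        integral_mono (integrable_pow_mul_heatKernel1 ht k)
          ((integrable_heatKernel1 h2t).const_mul _) (pow_mul_heatKernel1_le ht k)
    _ = 2 * k ! * (8 * t) ^ k := by rw [integral_const_mul, integral_heatKernel1 h2t, mul_one]

end HeatKernel

section Dipole

variable {t : ℝ}

lemma dipole_eq (x t : ℝ) : dipole x t = x / (2 * t) * heatKernel1 t x := by
  unfold dipole heatKernel1; ring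

@[fun_prop]
lemma continuous_dipole (t : ℝ) : Continuous fun x => dipole x t := by
  unfold dipole; fun_prop

lemma dipole_nonneg (ht : 0 < t) {x : ℝ} (hx : 0 ≤ x) : 0 ≤ dipole x t := by
  rw [dipole_eq]; have := heatKernel1_pos ht x; positivity

lemma hasDerivAt_heatKernel1 (t x : ℝ) : HasDerivAt (heatKernel1 t) (-dipole x t) x := by
  have h := (((hasDerivAt_pow 2 x).neg.div_const (4 * t)).exp).const_mul
    ((4 * π * t) ^ (-(1 : ℝ) / 2))
  refine h.congr_deriv ?_
  unfold dipole; simp only [Pi.neg_apply, Nat.cast_ofNat]; ring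

noncomputable def dipoleDeriv (t x : ℝ) : ℝ :=
  (1 / (2 * t) - x ^ 2 / (4 * t ^ 2)) * heatKernel1 t x

@[fun_prop]
lemma continuous_dipoleDeriv (t : ℝ) : Continuous (dipoleDeriv t) := by
  unfold dipoleDeriv; fun_prop

lemma hasDerivAt_dipole (t x : ℝ) : HasDerivAt (fun z => dipole z t) (dipoleDeriv t x) x := by
  have h := ((hasDerivAt_id x).div_const (2 * t)).mul (hasDerivAt_heatKernel1 t x)
  rw [show (fun z => dipole z t) = fun z => id z / (2 * t) * heatKernel1 t z from
    funext fun z => dipole_eq z t]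
  refine h.congr_deriv ?_
  rw [dipoleDeriv, dipole_eq, id]; ring

lemma abs_dipoleDeriv_le (ht : 0 < t) (x : ℝ) :
    |dipoleDeriv t x| ≤ (1 / (2 * t) + x ^ 2 / (4 * t ^ 2)) * heatKernel1 t x := by
  rw [dipoleDeriv, abs_mul, abs_of_pos (heatKernel1_pos ht x)]
  have h1 : 0 ≤ 1 / (2 * t) := by positivity
  have h2 : 0 ≤ x ^ 2 / (4 * t ^ 2) := by positivity
  refine mul_le_mul_of_nonneg_right ?_ (heatKernel1_pos ht x).le
  rw [abs_le]; constructor <;> linarith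

end Dipole

section Remainder

variable {t : ℝ}

lemma integrable_mul_heatKernel1 (ht : 0 < t) : Integrable fun x => x * heatKernel1 t x := by
  have h := (integrable_mul_exp_neg_mul_sq (b := (4 * t)⁻¹) (by positivity)).const_mul
    ((4 * π * t) ^ (-(1 : ℝ) / 2))
  refine h.congr (Eventually.of_forall fun x => ?_)
  simp only [heatKernel1_eq_gaussian]; ring

lemma integrable_mul_heatKernel1_sub (ht : 0 < t) (a : ℝ) :
    Integrable fun x => x * heatKernel1 t (x - a) := by
  have h := ((integrable_mul_heatKernel1 ht).add
    ((integrable_heatKernel1 ht).const_mul a)).comp_sub_right a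
  refine h.congr (Eventually.of_forall fun x => ?_)
  simp only [Pi.add_apply]; ring

lemma mul_dipole_eq (x t : ℝ) : x * dipole x t = x ^ 2 / (2 * t) * heatKernel1 t x := by
  rw [dipole_eq]; ring

lemma integrable_mul_dipole (ht : 0 < t) : Integrable fun x => x * dipole x t := by
  refine ((integrable_pow_mul_heatKernel1 ht 1).div_const (2 * t)).congr
    (Eventually.of_forall fun x => ?_)
  simp only [mul_dipole_eq]; ring

lemma integral_Ioi_mul_dipole_le (ht : 0 < t) : ∫ x in Ioi 0, x * dipole x t ≤ 8 := by
  have hmom : ∫ x, x ^ 2 * heatKernel1 t x ≤ 16 * t := by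
    have := integral_pow_mul_heatKernel1_le ht 1
    norm_num at this; linarith
  calc ∫ x in Ioi 0, x * dipole x t
      ≤ ∫ x, x * dipole x t := setIntegral_le_integral (integrable_mul_dipole ht)
        (Eventually.of_forall fun x => show 0 ≤ x * dipole x t by
          rw [mul_dipole_eq]; have := heatKernel1_pos ht x; positivity)
    _ = (∫ x, x ^ 2 * heatKernel1 t x) / (2 * t) := by
        rw [← integral_div]; congr 1; ext x; rw [mul_dipole_eq]; ring
    _ ≤ 8 := by
        rw [div_le_iff₀ (by positivity)]; linarith

/-- Reflecting `x ↦ -x` moves the `G_t(x + y)` part to the negative half-line, leaving the first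
moment of `G_t(· - y)` on the whole line. -/
lemma integral_Ioi_mul_heatKernel1_sub_heatKernel1_add (ht : 0 < t) (y : ℝ) :
    ∫ x in Ioi 0, x * (heatKernel1 t (x - y) - heatKernel1 t (x + y)) = y := by
  have hint := integrable_mul_heatKernel1_sub ht y
  have hreflect : ∫ x in Ioi 0, x * heatKernel1 t (x + y)
      = -∫ x in Iic 0, x * heatKernel1 t (x - y) := by
    have h := integral_comp_neg_Ioi 0 fun x => -(x * heatKernel1 t (x - y))
    rw [neg_zero] at h
    rw [← integral_neg, ← h]
    refine setIntegral_congr_fun measurableSet_Ioi fun x _ => ?_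
    rw [show -x - y = -(x + y) by ring, heatKernel1_neg]; ring
  have hodd : ∫ x, x * heatKernel1 t x = 0 := by
    have h := integral_neg_eq_self (fun x => x * heatKernel1 t x) volume
    simp only [heatKernel1_neg, neg_mul, integral_neg] at h
    linarith
  calc ∫ x in Ioi 0, x * (heatKernel1 t (x - y) - heatKernel1 t (x + y))
      = (∫ x in Iic 0, x * heatKernel1 t (x - y))
          + ∫ x in Ioi 0, x * heatKernel1 t (x - y) := by
        have hint' : Integrable fun x => x * heatKernel1 t (x + y) := by
          simpa using integrable_mul_heatKernel1_sub ht (-y)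
        simp only [mul_sub]
        rw [integral_sub hint.integrableOn hint'.integrableOn, hreflect, sub_neg_eq_add, add_comm]
    _ = ∫ x, (x + y) * heatKernel1 t x := by
        rw [intervalIntegral.integral_Iic_add_Ioi hint.integrableOn hint.integrableOn,
          ← integral_sub_right_eq_self (fun x => (x + y) * heatKernel1 t x) y]
        simp
    _ = y := by
        simp only [add_mul]
        rw [integral_add (integrable_mul_heatKernel1 ht) ((integrable_heatKernel1 ht).const_mul y),
          hodd, integral_const_mul, integral_heatKernel1 ht]
        ring

noncomputable def dipoleRemainder (t x y : ℝ) : ℝ :=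
  heatKernel1 t (x - y) - heatKernel1 t (x + y) - 2 * y * dipole x t

@[fun_prop]
lemma Continuous.dipoleRemainder {α : Type*} [TopologicalSpace α] {f g : α → ℝ}
    (hf : Continuous f) (hg : Continuous g) :
    Continuous fun a => dipoleRemainder t (f a) (g a) := by
  unfold _root_.dipoleRemainder dipole; fun_prop

lemma abs_dipoleRemainder_le_of_nonneg (ht : 0 < t) {x y : ℝ} (hx : 0 ≤ x) (hy : 0 ≤ y) :
    |dipoleRemainder t x y|
      ≤ heatKernel1 t (x - y) - heatKernel1 t (x + y) + 2 * y * dipole x t := by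
  have hG : heatKernel1 t (x + y) ≤ heatKernel1 t (x - y) := by
    unfold heatKernel1
    gcongr _ * exp (?_ / _)
    nlinarith
  have hD := dipole_nonneg ht hx
  rw [dipoleRemainder, abs_le]
  constructor <;> nlinarith

lemma dipoleRemainder_eq_integral (t x y : ℝ) :
    dipoleRemainder t x y = ∫ s in (x - y)..(x + y), (dipole s t - dipole x t) := by
  have hftc : ∫ s in (x - y)..(x + y), dipole s t
      = heatKernel1 t (x - y) - heatKernel1 t (x + y) := by
    rw [intervalIntegral.integral_eq_sub_of_hasDerivAt
      (f := -heatKernel1 t) (fun s _ => by simpa using (hasDerivAt_heatKernel1 t s).neg)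
      ((continuous_dipole t).intervalIntegrable _ _)]
    simp only [Pi.neg_apply]; ring
  rw [intervalIntegral.integral_sub ((continuous_dipole t).intervalIntegrable _ _)
    intervalIntegrable_const, hftc, intervalIntegral.integral_const, smul_eq_mul, dipoleRemainder]
  ring

lemma abs_dipoleRemainder_le {y : ℝ} (hy : 0 ≤ y) (x : ℝ) :
    |dipoleRemainder t x y| ≤ 2 * y * ∫ r in Icc (x - y) (x + y), |dipoleDeriv t r| := by
  set M := ∫ r in Icc (x - y) (x + y), |dipoleDeriv t r|
  have hosc : ∀ s ∈ uIoc (x - y) (x + y), ‖dipole s t - dipole x t‖ ≤ M := fun s hs => by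
    have hsub : uIoc x s ⊆ Icc (x - y) (x + y) := by
      rw [uIoc_of_le (by linarith)] at hs
      intro r hr
      rw [mem_uIoc] at hr
      rcases hr with ⟨h1, h2⟩ | ⟨h1, h2⟩ <;> constructor <;> linarith [hs.1, hs.2]
    rw [← intervalIntegral.integral_eq_sub_of_hasDerivAt (fun r _ => hasDerivAt_dipole t r)
      ((continuous_dipoleDeriv t).intervalIntegrable _ _)]
    refine intervalIntegral.norm_integral_le_integral_norm_uIoc.trans ?_
    exact setIntegral_mono_set (continuous_dipoleDeriv t).norm.integrableOn_Icc
      (Eventually.of_forall fun r => norm_nonneg _) hsub.eventuallyLE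
  have h := intervalIntegral.norm_integral_le_of_norm_le_const hosc
  rw [← dipoleRemainder_eq_integral, norm_eq_abs, show x + y - (x - y) = 2 * y by ring,
    abs_of_nonneg (by positivity : (0 : ℝ) ≤ 2 * y)] at h
  linarith

end Remainder

section DipoleDerivMoments

variable {t : ℝ}

lemma pow_mul_abs_dipoleDeriv_le (ht : 0 < t) (k : ℕ) (x : ℝ) :
    x ^ (2 * k) * |dipoleDeriv t x| ≤
      x ^ (2 * k) * heatKernel1 t x / (2 * t)
        + x ^ (2 * (k + 1)) * heatKernel1 t x / (4 * t ^ 2) := by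
  have hx : 0 ≤ x ^ (2 * k) := by rw [pow_mul]; positivity
  calc x ^ (2 * k) * |dipoleDeriv t x|
      ≤ x ^ (2 * k) * ((1 / (2 * t) + x ^ 2 / (4 * t ^ 2)) * heatKernel1 t x) := by
        gcongr; exact abs_dipoleDeriv_le ht x
    _ = _ := by ring

lemma integrable_pow_mul_abs_dipoleDeriv (ht : 0 < t) (k : ℕ) :
    Integrable fun x => x ^ (2 * k) * |dipoleDeriv t x| := by
  refine (((integrable_pow_mul_heatKernel1 ht k).div_const (2 * t)).add
    ((integrable_pow_mul_heatKernel1 ht (k + 1)).div_const (4 * t ^ 2))).mono' (by fun_prop)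
    (Eventually.of_forall fun x => ?_)
  rw [norm_of_nonneg (mul_nonneg (by rw [pow_mul]; positivity) (abs_nonneg _))]
  exact pow_mul_abs_dipoleDeriv_le ht k x

lemma integral_pow_mul_abs_dipoleDeriv_le (ht : 0 < t) (k : ℕ) :
    ∫ x, x ^ (2 * k) * |dipoleDeriv t x| ≤
      k ! * (8 * t) ^ k / t + (k + 1)! * (8 * t) ^ (k + 1) / (2 * t ^ 2) := by
  have h1 := (integrable_pow_mul_heatKernel1 ht k).div_const (2 * t)
  have h2 := (integrable_pow_mul_heatKernel1 ht (k + 1)).div_const (4 * t ^ 2)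
  have hm1 := integral_pow_mul_heatKernel1_le ht k
  have hm2 := integral_pow_mul_heatKernel1_le ht (k + 1)
  calc ∫ x, x ^ (2 * k) * |dipoleDeriv t x|
      ≤ ∫ x, (x ^ (2 * k) * heatKernel1 t x / (2 * t)
          + x ^ (2 * (k + 1)) * heatKernel1 t x / (4 * t ^ 2)) :=
        integral_mono (integrable_pow_mul_abs_dipoleDeriv ht k) (h1.add h2)
          (pow_mul_abs_dipoleDeriv_le ht k)
    _ = (∫ x, x ^ (2 * k) * heatKernel1 t x) / (2 * t)
          + (∫ x, x ^ (2 * (k + 1)) * heatKernel1 t x) / (4 * t ^ 2) := by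
        rw [integral_add h1 h2, integral_div, integral_div]
    _ ≤ 2 * k ! * (8 * t) ^ k / (2 * t) + 2 * (k + 1)! * (8 * t) ^ (k + 1) / (4 * t ^ 2) := by
        gcongr
    _ = _ := by field_simp; ring

lemma abs_dipoleDeriv_mul_le (ht : 0 < t) (y x : ℝ) :
    |dipoleDeriv t x| * (|x| + y) ≤
      (√t + y) * |dipoleDeriv t x| + x ^ 2 * |dipoleDeriv t x| / √t := by
  have h := abs_le_sqrt_add_sq_div_sqrt ht x
  calc |dipoleDeriv t x| * (|x| + y) ≤ |dipoleDeriv t x| * (√t + y + x ^ 2 / √t) :=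
        mul_le_mul_of_nonneg_left (by linarith) (abs_nonneg _)
    _ = _ := by ring

lemma integrable_abs_dipoleDeriv (ht : 0 < t) : Integrable fun x => |dipoleDeriv t x| := by
  simpa using integrable_pow_mul_abs_dipoleDeriv ht 0

lemma integrable_sq_mul_abs_dipoleDeriv (ht : 0 < t) :
    Integrable fun x => x ^ 2 * |dipoleDeriv t x| := by
  simpa using integrable_pow_mul_abs_dipoleDeriv ht 1

lemma integrable_abs_dipoleDeriv_mul (ht : 0 < t) {y : ℝ} (hy : 0 ≤ y) :
    Integrable fun x => |dipoleDeriv t x| * (|x| + y) :=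
  (((integrable_abs_dipoleDeriv ht).const_mul (√t + y)).add
    ((integrable_sq_mul_abs_dipoleDeriv ht).div_const √t)).mono' (by fun_prop)
    (Eventually.of_forall fun x => by
      rw [norm_of_nonneg (by positivity)]; exact abs_dipoleDeriv_mul_le ht y x)

lemma integral_abs_dipoleDeriv_mul_le (ht : 0 < t) {y : ℝ} (hy : 0 ≤ y) :
    ∫ x, |dipoleDeriv t x| * (|x| + y) ≤ 77 / √t + 5 * y / t := by
  have h0 := (integrable_abs_dipoleDeriv ht).const_mul (√t + y)
  have h2 := (integrable_sq_mul_abs_dipoleDeriv ht).div_const √t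
  have hm0 : ∫ x, |dipoleDeriv t x| ≤ 5 / t := by
    have := integral_pow_mul_abs_dipoleDeriv_le ht 0
    norm_num at this
    exact this.trans_eq (by field_simp; ring)
  have hm2 : ∫ x, x ^ 2 * |dipoleDeriv t x| ≤ 72 := by
    have := integral_pow_mul_abs_dipoleDeriv_le ht 1
    norm_num at this
    exact this.trans_eq (by field_simp; ring)
  calc ∫ x, |dipoleDeriv t x| * (|x| + y)
      ≤ ∫ x, ((√t + y) * |dipoleDeriv t x| + x ^ 2 * |dipoleDeriv t x| / √t) :=
        integral_mono (integrable_abs_dipoleDeriv_mul ht hy) (h0.add h2)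
          (abs_dipoleDeriv_mul_le ht y)
    _ = (√t + y) * (∫ x, |dipoleDeriv t x|) + (∫ x, x ^ 2 * |dipoleDeriv t x|) / √t := by
        rw [integral_add h0 h2, integral_const_mul, integral_div]
    _ ≤ (√t + y) * (5 / t) + 72 / √t := by gcongr
    _ = 77 / √t + 5 * y / t := by
        have hst : √t ^ 2 = t := sq_sqrt ht.le
        field_simp
        linear_combination 5 * hst

end DipoleDerivMoments

section WeightedRemainder

variable {t : ℝ}

noncomputable def remainderWeightedNorm (t y : ℝ) : ℝ :=
  ∫ x in Ioi 0, x * |dipoleRemainder t x y|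

lemma remainderWeightedNorm_nonneg (t y : ℝ) : 0 ≤ remainderWeightedNorm t y :=
  setIntegral_nonneg measurableSet_Ioi fun _ hx => mul_nonneg (le_of_lt hx) (abs_nonneg _)

lemma stronglyMeasurable_remainderWeightedNorm (t : ℝ) :
    StronglyMeasurable (remainderWeightedNorm t) :=
  (Continuous.stronglyMeasurable (by fun_prop :
    Continuous fun p : ℝ × ℝ => p.2 * |dipoleRemainder t p.2 p.1|)).integral_prod_right'

lemma integrableOn_mul_abs_dipoleRemainder (ht : 0 < t) (y : ℝ) :
    IntegrableOn (fun x => x * |dipoleRemainder t x y|) (Ioi 0) := by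
  have hint : Integrable fun x => x * heatKernel1 t (x - y) + x * heatKernel1 t (x + y)
      + 2 * |y| * (x * dipole x t) :=
    ((integrable_mul_heatKernel1_sub ht y).add
      (by simpa using integrable_mul_heatKernel1_sub ht (-y))).add
      ((integrable_mul_dipole ht).const_mul _)
  refine hint.integrableOn.mono' (by fun_prop) ?_
  filter_upwards [ae_restrict_mem measurableSet_Ioi] with x hx
  have hG₁ := heatKernel1_pos ht (x - y)
  have hG₂ := heatKernel1_pos ht (x + y)
  have hD := dipole_nonneg ht (le_of_lt hx)
  have hR : |dipoleRemainder t x y| ≤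
      heatKernel1 t (x - y) + heatKernel1 t (x + y) + 2 * |y| * dipole x t := by
    rw [dipoleRemainder, abs_le]
    constructor <;> nlinarith [neg_abs_le y, le_abs_self y]
  rw [norm_of_nonneg (mul_nonneg (le_of_lt hx) (abs_nonneg _))]
  calc x * |dipoleRemainder t x y|
      ≤ x * (heatKernel1 t (x - y) + heatKernel1 t (x + y) + 2 * |y| * dipole x t) :=
        mul_le_mul_of_nonneg_left hR (le_of_lt hx)
    _ = _ := by ring

lemma remainderWeightedNorm_le (ht : 0 < t) {y : ℝ} (hy : 0 ≤ y) :
    remainderWeightedNorm t y ≤ 17 * y := by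
  have hsub : Integrable fun x => x * (heatKernel1 t (x - y) - heatKernel1 t (x + y)) := by
    simp only [mul_sub]
    exact (integrable_mul_heatKernel1_sub ht y).sub
      (by simpa using integrable_mul_heatKernel1_sub ht (-y))
  have hdip := (integrable_mul_dipole ht).const_mul (2 * y)
  calc remainderWeightedNorm t y
      ≤ ∫ x in Ioi 0, (x * (heatKernel1 t (x - y) - heatKernel1 t (x + y))
          + 2 * y * (x * dipole x t)) := by
        refine setIntegral_mono_on (integrableOn_mul_abs_dipoleRemainder ht y)
          (hsub.add hdip).integrableOn measurableSet_Ioi fun x hx => ?_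
        calc x * |dipoleRemainder t x y|
            ≤ x * (heatKernel1 t (x - y) - heatKernel1 t (x + y) + 2 * y * dipole x t) :=
              mul_le_mul_of_nonneg_left (abs_dipoleRemainder_le_of_nonneg ht (le_of_lt hx) hy)
                (le_of_lt hx)
          _ = _ := by ring
    _ = y + 2 * y * ∫ x in Ioi 0, x * dipole x t := by
        rw [integral_add hsub.integrableOn hdip.integrableOn,
          integral_Ioi_mul_heatKernel1_sub_heatKernel1_add ht, integral_const_mul]
    _ ≤ 17 * y := by
        have := integral_Ioi_mul_dipole_le ht
        nlinarith

end WeightedRemainder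

section WeightedRemainderDecay

variable {t y : ℝ}

noncomputable def dipoleDerivWindow (t y r x : ℝ) : ℝ :=
  (Icc (r - y) (r + y)).indicator (fun x => x * |dipoleDeriv t r|) x

lemma integral_dipoleDerivWindow (x : ℝ) :
    ∫ r, dipoleDerivWindow t y r x = x * ∫ r in Icc (x - y) (x + y), |dipoleDeriv t r| := by
  rw [← integral_const_mul, ← integral_indicator measurableSet_Icc]
  congr 1; ext r
  simp only [dipoleDerivWindow, indicator_apply, mem_Icc]
  congr 1
  apply propext; constructor <;> rintro ⟨h₁, h₂⟩ <;> constructor <;> linarith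

lemma integral_Ioi_dipoleDerivWindow_le (hy : 0 ≤ y) (r : ℝ) :
    ∫ x in Ioi 0, dipoleDerivWindow t y r x ≤ 2 * y * (|dipoleDeriv t r| * (|r| + y)) :=
  (integral_Ioi_indicator_Icc_mul_le (abs_nonneg _) hy r).trans_eq (by ring)

lemma integrable_dipoleDerivWindow (ht : 0 < t) (hy : 0 ≤ y) :
    Integrable (Function.uncurry (dipoleDerivWindow t y))
      (volume.prod (volume.restrict (Ioi 0))) := by
  have hmeas : AEStronglyMeasurable (Function.uncurry (dipoleDerivWindow t y))
      (volume.prod (volume.restrict (Ioi 0))) := by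
    have hS : MeasurableSet ({p : ℝ × ℝ | p.1 - y ≤ p.2} ∩ {p | p.2 ≤ p.1 + y}) :=
      (measurableSet_le (by fun_prop) (by fun_prop)).inter
        (measurableSet_le (by fun_prop) (by fun_prop))
    have : Function.uncurry (dipoleDerivWindow t y) =
        ({p : ℝ × ℝ | p.1 - y ≤ p.2} ∩ {p | p.2 ≤ p.1 + y}).indicator
          fun p => p.2 * |dipoleDeriv t p.1| := by
      ext ⟨r, x⟩; simp [dipoleDerivWindow, indicator_apply]
    rw [this]
    exact ((Continuous.stronglyMeasurable (by fun_prop)).indicator hS).aestronglyMeasurable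
  have hnonneg : ∀ r, 0 ≤ᵐ[volume.restrict (Ioi 0)] dipoleDerivWindow t y r := fun r => by
    filter_upwards [ae_restrict_mem measurableSet_Ioi] with x hx
    exact indicator_apply_nonneg fun _ => mul_nonneg (le_of_lt hx) (abs_nonneg _)
  refine integrable_prod_of_nonneg hmeas (Eventually.of_forall hnonneg)
    (Eventually.of_forall fun r => ?_) ?_
  · exact ((by fun_prop : Continuous fun x => x * |dipoleDeriv t r|).integrableOn_Icc
      (a := r - y) (b := r + y) (μ := volume)).integrable_indicator measurableSet_Icc |>.restrict
  · refine ((integrable_abs_dipoleDeriv_mul ht hy).const_mul (2 * y)).mono'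
      hmeas.integral_prod_right' (Eventually.of_forall fun r => ?_)
    change ‖∫ x in Ioi 0, dipoleDerivWindow t y r x‖ ≤ _
    rw [norm_of_nonneg (integral_nonneg_of_ae (hnonneg r))]
    exact integral_Ioi_dipoleDerivWindow_le hy r

/-- Integrate `|R(t,x,y)| ≤ 2y ∫_{|r-x| ≤ y} |∂ₓD(r,t)| dr` against `x dx` and exchange
the integrals: each `r` is seen by a window of `x` of length at most `2y`. -/
lemma remainderWeightedNorm_le_sq (ht : 0 < t) (hy : 0 ≤ y) :
    remainderWeightedNorm t y ≤ 4 * y ^ 2 * (77 / √t + 5 * y / t) := by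
  have hint := integrable_dipoleDerivWindow ht hy
  calc remainderWeightedNorm t y
      ≤ ∫ x in Ioi 0, 2 * y * ∫ r, dipoleDerivWindow t y r x := by
        refine setIntegral_mono_on (integrableOn_mul_abs_dipoleRemainder ht y)
          (hint.integral_prod_right.const_mul _) measurableSet_Ioi fun x hx => ?_
        rw [integral_dipoleDerivWindow, mul_left_comm]
        exact mul_le_mul_of_nonneg_left (abs_dipoleRemainder_le hy x) (le_of_lt hx)
    _ = 2 * y * ∫ r, ∫ x in Ioi 0, dipoleDerivWindow t y r x := by
        rw [integral_const_mul, integral_integral_swap hint]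
    _ ≤ 2 * y * ∫ r, 2 * y * (|dipoleDeriv t r| * (|r| + y)) :=
        mul_le_mul_of_nonneg_left (integral_mono hint.integral_prod_left
          ((integrable_abs_dipoleDeriv_mul ht hy).const_mul _)
          (integral_Ioi_dipoleDerivWindow_le hy)) (by positivity)
    _ = 4 * y ^ 2 * ∫ r, |dipoleDeriv t r| * (|r| + y) := by
        rw [integral_const_mul]; ring
    _ ≤ 4 * y ^ 2 * (77 / √t + 5 * y / t) := by
        gcongr; exact integral_abs_dipoleDeriv_mul_le ht hy

lemma tendsto_remainderWeightedNorm (hy : 0 ≤ y) :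
    Tendsto (fun t => remainderWeightedNorm t y) atTop (nhds 0) := by
  have hlim : Tendsto (fun t => 4 * y ^ 2 * (77 / √t + 5 * y / t)) atTop (nhds 0) := by
    simpa using ((tendsto_const_nhds.div_atTop tendsto_sqrt_atTop).add
      (tendsto_const_nhds.div_atTop tendsto_id)).const_mul (4 * y ^ 2)
  refine squeeze_zero' (Eventually.of_forall fun t => remainderWeightedNorm_nonneg t y) ?_ hlim
  filter_upwards [eventually_gt_atTop 0] with t ht
  exact remainderWeightedNorm_le_sq ht hy

end WeightedRemainderDecay

section Solution

variable {u₀ : ℝ → ℝ} {t : ℝ}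

lemma integrableOn_heatKernel1_sub_mul (hu₀ : IntegrableOn u₀ (Ioi 0)) (ht : 0 < t) (x : ℝ) :
    IntegrableOn (fun y => (heatKernel1 t (x - y) - heatKernel1 t (x + y)) * u₀ y) (Ioi 0) := by
  refine hu₀.bdd_mul (c := 2 * (4 * π * t) ^ (-(1 : ℝ) / 2)) (by fun_prop)
    (Eventually.of_forall fun y => ?_)
  have h₁ := heatKernel1_pos ht (x - y)
  have h₂ := heatKernel1_pos ht (x + y)
  have h₁' := heatKernel1_le ht (x - y)
  have h₂' := heatKernel1_le ht (x + y)
  rw [norm_eq_abs, abs_le]; constructor <;> linarith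

lemma halfLineSol_sub_dipole_eq (hu₀ : IntegrableOn u₀ (Ioi 0))
    (hmom : IntegrableOn (fun y => y * |u₀ y|) (Ioi 0)) (ht : 0 < t) (x : ℝ) :
    halfLineSol u₀ x t - 2 * (∫ y in Ioi 0, y * u₀ y) * dipole x t
      = ∫ y in Ioi 0, dipoleRemainder t x y * u₀ y := by
  have hmom' : IntegrableOn (fun y => y * u₀ y) (Ioi 0) := by
    refine hmom.mono' (measurable_id.aestronglyMeasurable.mul hu₀.1) ?_
    filter_upwards [ae_restrict_mem measurableSet_Ioi] with y hy
    rw [norm_mul, norm_of_nonneg (le_of_lt hy), norm_eq_abs]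
  have hdip : 2 * (∫ y in Ioi 0, y * u₀ y) * dipole x t
      = ∫ y in Ioi 0, 2 * dipole x t * (y * u₀ y) := by
    rw [integral_const_mul]; ring
  rw [halfLineSol, hdip, ← integral_sub (integrableOn_heatKernel1_sub_mul hu₀ ht x)
    (hmom'.const_mul _)]
  congr 1; ext y
  rw [dipoleRemainder]; ring

lemma norm_abs_mul_remainderWeightedNorm_le (ht : 0 < t) {y : ℝ} (hy : 0 ≤ y) (a : ℝ) :
    ‖|a| * remainderWeightedNorm t y‖ ≤ 17 * (y * |a|) := by
  rw [norm_of_nonneg (mul_nonneg (abs_nonneg _) (remainderWeightedNorm_nonneg t y))]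
  calc |a| * remainderWeightedNorm t y ≤ |a| * (17 * y) :=
        mul_le_mul_of_nonneg_left (remainderWeightedNorm_le ht hy) (abs_nonneg _)
    _ = 17 * (y * |a|) := by ring

lemma tendsto_integral_abs_mul_remainderWeightedNorm
    (hu₀ : AEStronglyMeasurable u₀ (volume.restrict (Ioi 0)))
    (hmom : IntegrableOn (fun y => y * |u₀ y|) (Ioi 0)) :
    Tendsto (fun t => ∫ y in Ioi 0, |u₀ y| * remainderWeightedNorm t y) atTop (nhds 0) := by
  have h := tendsto_integral_filter_of_dominated_convergence (l := atTop)
    (F := fun t y => |u₀ y| * remainderWeightedNorm t y) (f := fun _ => 0)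
    (fun y => 17 * (y * |u₀ y|))
    (Eventually.of_forall fun t =>
      hu₀.norm.mul (stronglyMeasurable_remainderWeightedNorm t).aestronglyMeasurable)
    ?_ (hmom.const_mul 17) ?_
  · simpa using h
  · filter_upwards [eventually_gt_atTop 0] with t ht
    filter_upwards [ae_restrict_mem measurableSet_Ioi] with y hy
    exact norm_abs_mul_remainderWeightedNorm_le ht (le_of_lt hy) (u₀ y)
  · filter_upwards [ae_restrict_mem measurableSet_Ioi] with y hy
    simpa using (tendsto_remainderWeightedNorm (le_of_lt hy)).const_mul |u₀ y|

lemma integrable_abs_mul_dipoleRemainder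
    (hu₀ : AEStronglyMeasurable u₀ (volume.restrict (Ioi 0)))
    (hmom : IntegrableOn (fun y => y * |u₀ y|) (Ioi 0)) (ht : 0 < t) :
    Integrable (Function.uncurry fun y x => |u₀ y| * (x * |dipoleRemainder t x y|))
      ((volume.restrict (Ioi 0)).prod (volume.restrict (Ioi 0))) := by
  have hmeas : AEStronglyMeasurable
      (Function.uncurry fun y x => |u₀ y| * (x * |dipoleRemainder t x y|))
      ((volume.restrict (Ioi 0)).prod (volume.restrict (Ioi 0))) :=
    hu₀.norm.comp_fst.mul (Continuous.aestronglyMeasurable (by fun_prop))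
  refine integrable_prod_of_nonneg hmeas (Eventually.of_forall fun y => ?_)
    (Eventually.of_forall fun y =>
      (integrableOn_mul_abs_dipoleRemainder ht y).const_mul |u₀ y|) ?_
  · filter_upwards [ae_restrict_mem measurableSet_Ioi] with x hx
    exact mul_nonneg (abs_nonneg _) (mul_nonneg (le_of_lt hx) (abs_nonneg _))
  · refine (hmom.const_mul 17).mono' hmeas.integral_prod_right' ?_
    filter_upwards [ae_restrict_mem measurableSet_Ioi] with y hy
    change ‖∫ x in Ioi 0, |u₀ y| * (x * |dipoleRemainder t x y|)‖ ≤ _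
    rw [integral_const_mul]
    exact norm_abs_mul_remainderWeightedNorm_le ht (le_of_lt hy) (u₀ y)

lemma integral_abs_halfLineSol_sub_dipole_mul_le (hu₀ : IntegrableOn u₀ (Ioi 0))
    (hmom : IntegrableOn (fun y => y * |u₀ y|) (Ioi 0)) (ht : 0 < t) :
    ∫ x in Ioi 0, |halfLineSol u₀ x t - 2 * (∫ y in Ioi 0, y * u₀ y) * dipole x t| * x
      ≤ ∫ y in Ioi 0, |u₀ y| * remainderWeightedNorm t y := by
  have hint := integrable_abs_mul_dipoleRemainder hu₀.1 hmom ht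
  calc ∫ x in Ioi 0, |halfLineSol u₀ x t - 2 * (∫ y in Ioi 0, y * u₀ y) * dipole x t| * x
      ≤ ∫ x in Ioi 0, ∫ y in Ioi 0, |u₀ y| * (x * |dipoleRemainder t x y|) := by
        refine integral_mono_of_nonneg ?_ hint.integral_prod_right ?_
        · filter_upwards [ae_restrict_mem measurableSet_Ioi] with x hx
          exact mul_nonneg (abs_nonneg _) (le_of_lt hx)
        filter_upwards [ae_restrict_mem measurableSet_Ioi] with x hx
        rw [halfLineSol_sub_dipole_eq hu₀ hmom ht, mul_comm]
        calc x * |∫ y in Ioi 0, dipoleRemainder t x y * u₀ y|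
            ≤ x * ∫ y in Ioi 0, |dipoleRemainder t x y * u₀ y| :=
              mul_le_mul_of_nonneg_left abs_integral_le_integral_abs (le_of_lt hx)
          _ = ∫ y in Ioi 0, |u₀ y| * (x * |dipoleRemainder t x y|) := by
              rw [← integral_const_mul]; congr 1; ext y; rw [abs_mul]; ring
    _ = ∫ y in Ioi 0, |u₀ y| * remainderWeightedNorm t y := by
        rw [← integral_integral_swap hint]
        simp only [integral_const_mul, remainderWeightedNorm]

end Solution

/-- Dipole asymptotics in the weighted `L¹(x dx)` norm: for data with finite first
absolute moment, `∫₀^∞ |u(x,t) − 2𝒩₁·D(x,t)|·x dx → 0` as `t → ∞`. -/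
theorem halfline_dipole_weighted_convergence (u₀ : ℝ → ℝ)
    (hu₀ : IntegrableOn u₀ (Set.Ioi (0 : ℝ)))
    (hmom : IntegrableOn (fun y => y * |u₀ y|) (Set.Ioi (0 : ℝ))) :
    Tendsto (fun t : ℝ =>
        ∫ x in Set.Ioi (0 : ℝ),
          |halfLineSol u₀ x t -
            2 * (∫ y in Set.Ioi (0 : ℝ), y * u₀ y) * dipole x t| * x)
      atTop (nhds 0) := by
  refine squeeze_zero' (Eventually.of_forall fun t => setIntegral_nonneg measurableSet_Ioi
    fun x hx => mul_nonneg (abs_nonneg _) (le_of_lt hx)) ?_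
    (tendsto_integral_abs_mul_remainderWeightedNorm hu₀.1 hmom)
  filter_upwards [eventually_gt_atTop 0] with t ht
  exact integral_abs_halfLineSol_sub_dipole_mul_le hu₀ hmom ht
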